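/- Let D be a minimal obstruction. Then the underlying multigraph of D is 2-vertex-connected, and D is oriented, acyclic, and transitively reduced. -/

import Mathlib

open Relation

/-! ## Finite directed multigraphs -/

/-- A finite directed multigraph: finite vertex and edge types together with
tail and head maps (loops and parallel/anti-parallel edges are allowed). -/
structure MultiDigraph : Type 1 where
  V : Type
  E : Type
  [fv : Fintype V]
  [fe : Fintype E]
  [dv : DecidableEq V]
  [de : DecidableEq E]
  tail : E → V
  head : E → V

attribute [instance] MultiDigraph.fv MultiDigraph.fe MultiDigraph.dv MultiDigraph.de

namespace MultiDigraph

variable (D : MultiDigraph)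

/-- The set of edges crossing the partition `(X, Xᶜ)` of the vertex set. -/
def cutAt (X : Set D.V) : Set D.E :=
  {e | (D.tail e ∈ X ∧ D.head e ∉ X) ∨ (D.tail e ∉ X ∧ D.head e ∈ X)}

/-- A cut: a nonempty set of edges of the form `cutAt X`. -/
def IsCut (S : Set D.E) : Prop := S.Nonempty ∧ ∃ X : Set D.V, S = D.cutAt X

/-- A bond: a cut containing no other cut properly. -/
def IsBond (S : Set D.E) : Prop := D.IsCut S ∧ ∀ S', D.IsCut S' → S' ⊆ S → S' = S

/-- A directed cut: a nonempty cut `cutAt X` such that no edge enters `X`. -/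
def IsDirectedCut (S : Set D.E) : Prop :=
  S.Nonempty ∧ ∃ X : Set D.V, S = D.cutAt X ∧ ∀ e : D.E, ¬(D.tail e ∉ X ∧ D.head e ∈ X)

/-- A directed bond: a bond which is a directed cut. -/
def IsDirectedBond (S : Set D.E) : Prop := D.IsBond S ∧ D.IsDirectedCut S

/-- An odd dijoin: an edge set meeting every directed bond an odd number of times. -/
def IsOddDijoin (J : Set D.E) : Prop := ∀ S : Set D.E, D.IsDirectedBond S → Odd (J ∩ S).ncard

def HasOddDijoin : Prop := ∃ J : Set D.E, D.IsOddDijoin J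

/-- One-step relation used for weak connectivity of the subgraph spanned by `A`:
`x` and `y` are joined by an edge of `A`. -/
def touchRel (A : Set D.E) : D.V → D.V → Prop :=
  fun x y => ∃ e ∈ A, D.tail e = x ∧ D.head e = y

/-- Contraction `D/A`: delete the edges of `A` and identify each weak component of `D[A]`. -/
noncomputable def contract (A : Set D.E) : MultiDigraph :=
  letI s := EqvGen.setoid (D.touchRel A)
  { V := Quotient s
    E := {e : D.E // e ∉ A}
    fv := Fintype.ofFinite _
    fe := Fintype.ofFinite _
    dv := Classical.decEq _
    de := Classical.decEq _
    tail := fun e => Quotient.mk s (D.tail e.1)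
    head := fun e => Quotient.mk s (D.head e.1) }

/-- A step of a directed walk. -/
def dstep : D.V → D.V → Prop := fun a b => ∃ e : D.E, D.tail e = a ∧ D.head e = b

/-- A step of a directed walk avoiding a fixed edge `e₀`. -/
def dstepAvoiding (e₀ : D.E) : D.V → D.V → Prop :=
  fun a b => ∃ e : D.E, e ≠ e₀ ∧ D.tail e = a ∧ D.head e = b

/-- An edge is deletable if it is not a loop and there is a directed path from its tail
to its head not using it. -/
def Deletable (e : D.E) : Prop :=
  D.tail e ≠ D.head e ∧ ReflTransGen (D.dstepAvoiding e) (D.tail e) (D.head e)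

/-- Deleting one edge. -/
noncomputable def deleteEdge (e : D.E) : MultiDigraph where
  V := D.V
  E := {f : D.E // f ≠ e}
  fv := D.fv
  fe := Fintype.ofFinite _
  dv := D.dv
  de := Classical.decEq _
  tail := fun f => D.tail f.1
  head := fun f => D.head f.1

/-- An isolated vertex. -/
def Isolated (v : D.V) : Prop := ∀ e : D.E, D.tail e ≠ v ∧ D.head e ≠ v

/-- Deleting an isolated vertex. -/
noncomputable def deleteVertex (v : D.V) (h : D.Isolated v) : MultiDigraph where
  V := {u : D.V // u ≠ v}
  E := D.E
  fv := Fintype.ofFinite _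
  fe := D.fe
  dv := Classical.decEq _
  de := D.de
  tail := fun e => ⟨D.tail e, (h e).1⟩
  head := fun e => ⟨D.head e, (h e).2⟩

/-- A digraph is acyclic if it has no directed cycle. -/
def Acyclic : Prop := ∀ a b : D.V, D.dstep a b → ¬ ReflTransGen D.dstep b a

/-- A step of an undirected walk. -/
def ustep : D.V → D.V → Prop :=
  fun a b => ∃ e : D.E, (D.tail e = a ∧ D.head e = b) ∨ (D.tail e = b ∧ D.head e = a)

/-- Weak connectivity. -/
def WeaklyConnected : Prop := ∀ a b : D.V, ReflTransGen D.ustep a b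

/-- A step of an undirected walk avoiding the vertex `v`. -/
def ustepAvoiding (v : D.V) : D.V → D.V → Prop :=
  fun a b => a ≠ v ∧ b ≠ v ∧ D.ustep a b

/-- The underlying multigraph is 2-vertex-connected. -/
def TwoConnected : Prop :=
  3 ≤ Fintype.card D.V ∧ D.WeaklyConnected ∧
    ∀ v a b : D.V, a ≠ v → b ≠ v → ReflTransGen (D.ustepAvoiding v) a b

/-- `D` is an oriented graph: no loops and no pair of parallel or anti-parallel edges. -/
def Oriented : Prop :=
  (∀ e : D.E, D.tail e ≠ D.head e) ∧
    ∀ e f : D.E, e ≠ f → ({D.tail e, D.head e} : Set D.V) ≠ {D.tail f, D.head f}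

/-- `D` is transitively reduced: no edge of `D` is deletable. -/
def TransitivelyReduced : Prop := ∀ e : D.E, ¬ D.Deletable e

end MultiDigraph

/-! ## Digraph isomorphism -/

/-- An isomorphism of directed multigraphs. -/
structure DigraphIso (D₁ D₂ : MultiDigraph) where
  vmap : D₁.V ≃ D₂.V
  emap : D₁.E ≃ D₂.E
  tail_eq : ∀ e, D₂.tail (emap e) = vmap (D₁.tail e)
  head_eq : ∀ e, D₂.head (emap e) = vmap (D₁.head e)

def IsIsomorphic (D₁ D₂ : MultiDigraph) : Prop := Nonempty (DigraphIso D₁ D₂)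

/-! ## Cut minors -/

/-- A single cut-minor step: contraction of an edge, deletion of a deletable edge, or
deletion of an isolated vertex. -/
inductive CutMinorStep : MultiDigraph → MultiDigraph → Prop
  | contractEdge (D : MultiDigraph) (e : D.E) : CutMinorStep (D.contract {e}) D
  | delEdge (D : MultiDigraph) (e : D.E) (h : D.Deletable e) : CutMinorStep (D.deleteEdge e) D
  | delVertex (D : MultiDigraph) (v : D.V) (h : D.Isolated v) :
      CutMinorStep (D.deleteVertex v h) D

/-- `D₁` is a cut minor of `D₂`. -/
def IsCutMinor (D₁ D₂ : MultiDigraph) : Prop := ReflTransGen CutMinorStep D₁ D₂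

/-- A proper cut minor: a cut minor which is not isomorphic to the digraph itself. -/
def IsProperCutMinor (D₁ D₂ : MultiDigraph) : Prop :=
  IsCutMinor D₁ D₂ ∧ ¬ IsIsomorphic D₁ D₂

/-- A minimal obstruction: a digraph without an odd dijoin all of whose proper cut minors
have an odd dijoin. -/
def MinimalObstruction (D : MultiDigraph) : Prop :=
  ¬ D.HasOddDijoin ∧ ∀ D' : MultiDigraph, IsProperCutMinor D' D → D'.HasOddDijoin

/-! ## Cycles and forests in the underlying multigraph -/

namespace MultiDigraph

variable (D : MultiDigraph)

/-- `X : D.E → SignType` is the signed incidence vector of a cycle of the underlying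
multigraph of `D`, signs recording forward/backward edges of a cyclic traversal. -/
def IsSignedCycle (X : D.E → SignType) : Prop :=
  ∃ n : ℕ, 0 < n ∧ ∃ (v : ZMod n → D.V) (ed : ZMod n → D.E) (dir : ZMod n → Bool),
    Function.Injective v ∧ Function.Injective ed ∧
    (∀ i, (dir i = true → D.tail (ed i) = v i ∧ D.head (ed i) = v (i + 1)) ∧
      (dir i = false → D.tail (ed i) = v (i + 1) ∧ D.head (ed i) = v i)) ∧
    (∀ i, X (ed i) = if dir i then 1 else -1) ∧
    (∀ f, (∀ i, ed i ≠ f) → X f = 0)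

/-- The sub-multigraph spanned by `A` is a forest: it contains no cycle. -/
def IsForestOn (A : Set D.E) : Prop :=
  ¬ ∃ X : D.E → SignType, D.IsSignedCycle X ∧ ∀ e : D.E, X e ≠ 0 → e ∈ A

end MultiDigraph

/-! ## The cut space over 𝔽₂ -/

/-- Indicator vector of a set, over `𝔽₂ = ZMod 2`. -/
noncomputable def eindicator {α : Type} (C : Set α) : α → ZMod 2 := C.indicator 1

namespace MultiDigraph

variable (D : MultiDigraph)

/-- The cut space of (the underlying multigraph of) `D`: the `𝔽₂`-span of the
indicator vectors of the bonds. -/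
noncomputable def cutSpace : Submodule (ZMod 2) (D.E → ZMod 2) :=
  Submodule.span (ZMod 2) (eindicator '' {S : Set D.E | D.IsBond S})

/-- `ℬ` is a basis of the cut space of `D` (a family of edge sets whose indicator
vectors are linearly independent and span the cut space). -/
noncomputable def IsCutSpaceBasis (ℬ : Set (Set D.E)) : Prop :=
  LinearIndependent (ZMod 2) (fun S : ℬ => eindicator (S : Set D.E)) ∧
    Submodule.span (ZMod 2) (eindicator '' ℬ) = D.cutSpace

end MultiDigraph

/-! ## Special digraphs -/

/-- The digraph `𝒟(n₀,n₁,n₂)`: three layers, with all edges from layer 0 to layer 1 and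
from layer 1 to layer 2. -/
def layeredD (n₀ n₁ n₂ : ℕ) : MultiDigraph where
  V := (Fin n₀ ⊕ Fin n₁) ⊕ Fin n₂
  E := (Fin n₀ × Fin n₁) ⊕ (Fin n₁ × Fin n₂)
  tail := Sum.elim (fun p => Sum.inl (Sum.inl p.1)) (fun p => Sum.inl (Sum.inr p.1))
  head := Sum.elim (fun p => Sum.inl (Sum.inr p.2)) (fun p => Sum.inr p.2)

/-- `K⃗_{m,n}`: the complete bipartite graph oriented from the class of size `m` to the
class of size `n`. -/
def oneDirK (m n : ℕ) : MultiDigraph where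
  V := Fin m ⊕ Fin n
  E := Fin m × Fin n
  tail := fun p => Sum.inl p.1
  head := fun p => Sum.inr p.2

/-- A diamond: two hubs and `n` further vertices, each of which is either a source with its
two edges going to the hubs, or a sink with its two edges coming from the hubs
(`σ i = true` meaning `xᵢ` is a source). -/
def diamondD (n : ℕ) (σ : Fin n → Bool) : MultiDigraph where
  V := Fin n ⊕ Fin 2
  E := Fin n × Fin 2
  tail := fun p => if σ p.1 then Sum.inl p.1 else Sum.inr p.2
  head := fun p => if σ p.1 then Sum.inr p.2 else Sum.inl p.1

/-- The bicycle `C⃡_k`: the cycle of length `k` with every edge replaced by a pair of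
anti-parallel directed edges. -/
noncomputable def bicycle (k : ℕ) (hk : k ≠ 0) : MultiDigraph :=
  haveI : NeZero k := ⟨hk⟩
  { V := ZMod k
    E := ZMod k × Bool
    fv := inferInstance
    fe := inferInstance
    dv := inferInstance
    de := inferInstance
    tail := fun p => if p.2 then p.1 else p.1 + 1
    head := fun p => if p.2 then p.1 + 1 else p.1 }

/-- An odd diamond. -/
def IsOddDiamond (D : MultiDigraph) : Prop :=
  ∃ (n : ℕ) (σ : Fin n → Bool), 3 ≤ n ∧ Odd (n + 2) ∧ IsIsomorphic D (diamondD n σ)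

/-- An odd one-direction. -/
def IsOddOneDirection (D : MultiDigraph) : Prop :=
  ∃ m n : ℕ, 2 ≤ m ∧ 2 ≤ n ∧ Odd (m + n) ∧ IsIsomorphic D (oneDirK m n)

/-! ## Symmetric difference of a family of sets -/

/-- The symmetric difference of a finite family of sets. -/
def symmDiffFam {α : Type} {k : ℕ} (F : Fin k → Set α) : Set α :=
  {a | Odd ({i : Fin k | a ∈ F i}).ncard}

/-! ## Oriented matroids -/

/-- Raw data of an oriented matroid: a finite ground set together with a collection of
signed subsets (encoded as functions to `SignType`). -/
structure PreOM : Type 1 where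
  E : Type
  [fe : Fintype E]
  [de : DecidableEq E]
  circuits : Set (E → SignType)

attribute [instance] PreOM.fe PreOM.de

/-- The support of a signed set. -/
def sgnSupport {α : Type} (X : α → SignType) : Set α := {e | X e ≠ 0}

namespace PreOM

/-- The oriented matroid axioms for the collection of signed circuits. -/
def IsOM (M : PreOM) : Prop :=
  (0 : M.E → SignType) ∉ M.circuits ∧
  (∀ X ∈ M.circuits, -X ∈ M.circuits) ∧
  (∀ X ∈ M.circuits, ∀ Y ∈ M.circuits, sgnSupport X ⊆ sgnSupport Y → X = Y ∨ X = -Y) ∧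
  ∀ X ∈ M.circuits, ∀ Y ∈ M.circuits, X ≠ -Y → ∀ e : M.E, X e = 1 → Y e = -1 →
    ∃ Z ∈ M.circuits, (∀ f, Z f = 1 → f ≠ e ∧ (X f = 1 ∨ Y f = 1)) ∧
      ∀ f, Z f = -1 → f ≠ e ∧ (X f = -1 ∨ Y f = -1)

/-- The circuits of the underlying matroid: supports of signed circuits. -/
def UCircuits (M : PreOM) : Set (Set M.E) :=
  {C | ∃ X ∈ M.circuits, C = sgnSupport X}

/-- A directed circuit: the support of a signed circuit with empty negative part. -/
def IsDirectedCircuit (M : PreOM) (C : Set M.E) : Prop :=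
  ∃ X ∈ M.circuits, (∀ e, X e ≠ -1) ∧ C = {e | X e = 1}

/-- Independent sets of the underlying matroid. -/
def Indep (M : PreOM) (I : Set M.E) : Prop := ∀ C ∈ M.UCircuits, ¬ C ⊆ I

/-- Bases of the underlying matroid. -/
def IsBase (M : PreOM) (B : Set M.E) : Prop :=
  M.Indep B ∧ ∀ B', M.Indep B' → B ⊆ B' → B' = B

/-- Cocircuits of the underlying matroid: minimal sets meeting every base. -/
def IsCocircuit (M : PreOM) (S : Set M.E) : Prop :=
  (∀ B, M.IsBase B → (S ∩ B).Nonempty) ∧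
    ∀ S' : Set M.E, S' ⊂ S → ¬ ∀ B, M.IsBase B → (S' ∩ B).Nonempty

/-- Signed cocircuits: signed sets supported on a cocircuit and orthogonal to every
signed circuit. -/
def IsSignedCocircuit (M : PreOM) (Y : M.E → SignType) : Prop :=
  M.IsCocircuit (sgnSupport Y) ∧
    ∀ X ∈ M.circuits,
      ((∃ e, (Y e = 1 ∧ X e = 1) ∨ (Y e = -1 ∧ X e = -1)) ↔
        (∃ e, (Y e = 1 ∧ X e = -1) ∨ (Y e = -1 ∧ X e = 1)))

/-- An element `e` is butterfly-contractible if there is a cocircuit `S` with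
`(S \ {e}, {e})` a signed cocircuit. -/
def ButterflyContractible (M : PreOM) (e : M.E) : Prop :=
  ∃ Y : M.E → SignType, M.IsSignedCocircuit Y ∧ Y e = -1 ∧ ∀ f, f ≠ e → Y f ≠ -1

/-- Deletion of a set of elements. -/
noncomputable def deleteSet (M : PreOM) (A : Set M.E) : PreOM where
  E := {f : M.E // f ∉ A}
  fe := Fintype.ofFinite _
  de := Classical.decEq _
  circuits := {X : {f : M.E // f ∉ A} → SignType |
    ∃ X' ∈ M.circuits, (∀ a ∈ A, X' a = 0) ∧ ∀ f : {f : M.E // f ∉ A}, X f = X' f.1}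

/-- Contraction of a single element: signed circuits are the support-minimal nonempty
traces of signed circuits. -/
noncomputable def contractElem (M : PreOM) (e : M.E) : PreOM where
  E := {f : M.E // f ≠ e}
  fe := Fintype.ofFinite _
  de := Classical.decEq _
  circuits := {X : {f : M.E // f ≠ e} → SignType |
    X ≠ 0 ∧ ∃ X' ∈ M.circuits, (∀ f : {f : M.E // f ≠ e}, X f = X' f.1) ∧
      ¬ ∃ Z ∈ M.circuits, (sgnSupport Z \ {e}) ⊂ (sgnSupport X' \ {e})}

/-- Isomorphism of (pre-)oriented matroids. -/
def Iso (M N : PreOM) : Prop :=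
  ∃ σ : M.E ≃ N.E, ∀ X : N.E → SignType, X ∈ N.circuits ↔ (X ∘ σ) ∈ M.circuits

/-- A minimal dependent set of a vector configuration. -/
def IsMinimalDep {F : Type} [Field F] {n : ℕ} {E : Type} (φ : E → (Fin n → F))
    (C : Set E) : Prop :=
  ¬ LinearIndependent F (fun e : C => φ e.1) ∧
    ∀ C' : Set E, C' ⊂ C → LinearIndependent F (fun e : C' => φ e.1)

/-- The underlying matroid is regular: representable over every field. -/
def Regular (M : PreOM) : Prop :=
  ∀ (F : Type) [Field F], ∃ (n : ℕ) (φ : M.E → (Fin n → F)),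
    ∀ C : Set M.E, C ∈ M.UCircuits ↔ IsMinimalDep φ C

/-- `M` is non-even: its underlying matroid is regular and some set of elements meets
every directed circuit an odd number of times. -/
def NonEven (M : PreOM) : Prop :=
  M.Regular ∧ ∃ J : Set M.E, ∀ C : Set M.E, M.IsDirectedCircuit C → Odd (J ∩ C).ncard

/-- Totally cyclic: every element lies in a directed circuit. -/
def TotallyCyclic (M : PreOM) : Prop :=
  ∀ e : M.E, ∃ C : Set M.E, M.IsDirectedCircuit C ∧ e ∈ C

/-- Coindependent set: contains no cocircuit. -/
def Coindependent (M : PreOM) (A : Set M.E) : Prop :=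
  ∀ S : Set M.E, M.IsCocircuit S → ¬ S ⊆ A

/-- The circuit space of the underlying (binary) matroid, over `𝔽₂`. -/
noncomputable def circuitSpace (M : PreOM) : Submodule (ZMod 2) (M.E → ZMod 2) :=
  Submodule.span (ZMod 2) (eindicator '' M.UCircuits)

/-- A directed circuit basis: a family of directed circuits whose indicator vectors form a
basis of the circuit space. -/
noncomputable def IsDirectedCircuitBasis (M : PreOM) (ℬ : Set (Set M.E)) : Prop :=
  (∀ C ∈ ℬ, M.IsDirectedCircuit C) ∧
    LinearIndependent (ZMod 2) (fun C : ℬ => eindicator (C : Set M.E)) ∧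
    Submodule.span (ZMod 2) (eindicator '' ℬ) = M.circuitSpace

end PreOM

/-! ## GB-minors -/

/-- A single GB-minor step: deletion of an element, or contraction of a
butterfly-contractible element. -/
inductive GBStep : PreOM → PreOM → Prop
  | del (M : PreOM) (e : M.E) : GBStep (M.deleteSet {e}) M
  | con (M : PreOM) (e : M.E) (h : M.ButterflyContractible e) : GBStep (M.contractElem e) M

/-- `N` is a GB-minor of `M`. -/
def IsGBMinor (N M : PreOM) : Prop := ReflTransGen GBStep N M

/-! ## Oriented matroids from digraphs -/

/-- The oriented bond matroid `M*(D)` of a digraph `D`: signed circuits are the signed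
incidence vectors of the bonds of `D`. -/
def bondOM (D : MultiDigraph) : PreOM where
  E := D.E
  circuits := {X : D.E → SignType | ∃ W : Set D.V, D.IsBond (D.cutAt W) ∧
    ∀ e : D.E, (X e = 1 ↔ (D.tail e ∈ W ∧ D.head e ∉ W)) ∧
      (X e = -1 ↔ (D.head e ∈ W ∧ D.tail e ∉ W))}

/-- The oriented graphic matroid `M(D)` of a digraph `D`: signed circuits are the signed
incidence vectors of the cycles of the underlying multigraph of `D`. -/
def cycleOM (D : MultiDigraph) : PreOM where
  E := D.E
  circuits := {X : D.E → SignType | D.IsSignedCycle X}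

/-!
Every one-step cut minor of a minimal obstruction `D` is proper, as it has fewer edges or
vertices, so it has an odd dijoin; each property of `D` follows by lifting such a dijoin back
to `D`. A directed bond of `D` avoiding an edge `e` stays a directed bond of `D / e`, and no
directed cut contains an edge lying on a directed cycle. Deleting a deletable edge `e` keeps
directed bonds, because the directed path avoiding `e` crosses every cut through `e` in the
same direction as `e`. If a vertex `v` separated the underlying graph (or the graph were
disconnected), every bond would lie on one side, and odd dijoins of `D / e₁` and `D / e₂`
for edges `e₁`, `e₂` on opposite sides would glue to one of `D`. Parallel edges make one of
them deletable, anti-parallel edges form a directed cycle, and on at most two vertices all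
nonempty cuts coincide.
-/

lemma odd_ncard_image_val_inter {α : Type*} {p : α → Prop} {J : Set (Subtype p)} {S : Set α}
    (h : Odd (J ∩ Subtype.val ⁻¹' S).ncard) : Odd ((Subtype.val '' J) ∩ S).ncard := by
  rwa [← Set.image_inter_preimage, Set.ncard_image_of_injective _ Subtype.val_injective]

namespace MultiDigraph

variable {D : MultiDigraph}

lemma mem_cutAt {X : Set D.V} {f : D.E} :
    f ∈ D.cutAt X ↔ (D.tail f ∈ X ∧ D.head f ∉ X) ∨ (D.tail f ∉ X ∧ D.head f ∈ X) :=
  Iff.rfl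

lemma cutAt_compl (X : Set D.V) : D.cutAt Xᶜ = D.cutAt X := by
  ext f
  simp only [mem_cutAt, Set.mem_compl_iff, not_not]
  tauto

lemma mem_cutAt_iff_of_no_entering {X : Set D.V} (hX : ∀ e : D.E, ¬(D.tail e ∉ X ∧ D.head e ∈ X))
    {f : D.E} : f ∈ D.cutAt X ↔ D.tail f ∈ X ∧ D.head f ∉ X := by
  have := hX f
  rw [mem_cutAt]
  tauto

lemma notMem_of_reflTransGen_dstep {X : Set D.V}
    (hX : ∀ e : D.E, ¬(D.tail e ∉ X ∧ D.head e ∈ X)) {a b : D.V}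
    (h : ReflTransGen D.dstep a b) (ha : a ∉ X) : b ∉ X := by
  induction h with
  | refl => exact ha
  | tail _ hcb ih =>
    obtain ⟨e, rfl, rfl⟩ := hcb
    exact fun hb => hX e ⟨ih, hb⟩

lemma reflTransGen_dstep_of_dstepAvoiding {e : D.E} {a b : D.V}
    (h : ReflTransGen (D.dstepAvoiding e) a b) : ReflTransGen D.dstep a b :=
  ReflTransGen.mono (fun _ _ ⟨f, _, hf⟩ => ⟨f, hf⟩) _ _ h

lemma exists_mem_cutAt_of_reflTransGen {e : D.E} {Y : Set D.V} {a b : D.V}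
    (h : ReflTransGen (D.dstepAvoiding e) a b) (ha : a ∈ Y) (hb : b ∉ Y) :
    ∃ g ≠ e, g ∈ D.cutAt Y ∧ ReflTransGen D.dstep a (D.tail g) ∧
      ReflTransGen D.dstep (D.head g) b := by
  induction h with
  | refl => exact absurd ha hb
  | @tail _ b hac hcb ih =>
    obtain ⟨f, hfe, rfl, rfl⟩ := hcb
    by_cases hc : D.tail f ∈ Y
    · exact ⟨f, hfe, Or.inl ⟨hc, hb⟩, reflTransGen_dstep_of_dstepAvoiding hac, .refl⟩
    · obtain ⟨g, hge, hg, hag, hgc⟩ := ih hc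
      exact ⟨g, hge, hg, hag, hgc.tail ⟨f, rfl, rfl⟩⟩

lemma notMem_cutAt_of_reflTransGen {X : Set D.V}
    (hX : ∀ e : D.E, ¬(D.tail e ∉ X ∧ D.head e ∈ X)) {e : D.E}
    (h : ReflTransGen D.dstep (D.head e) (D.tail e)) : e ∉ D.cutAt X := by
  rw [mem_cutAt_iff_of_no_entering hX]
  exact fun ⟨ht, hh⟩ => notMem_of_reflTransGen_dstep hX h hh ht

lemma Deletable.exists_mem_cutAt {e : D.E} (hdel : D.Deletable e) {Y : Set D.V}
    (heY : e ∈ D.cutAt Y) :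
    ∃ g ≠ e, g ∈ D.cutAt Y ∧ ReflTransGen D.dstep (D.tail e) (D.tail g) ∧
      ReflTransGen D.dstep (D.head g) (D.head e) := by
  rcases heY with ⟨ht, hh⟩ | ⟨ht, hh⟩
  · exact exists_mem_cutAt_of_reflTransGen hdel.2 ht hh
  · rw [← cutAt_compl]
    exact exists_mem_cutAt_of_reflTransGen hdel.2 ht (not_not.mpr hh)

lemma Deletable.mem_cutAt_of_diff_subset {e : D.E} (hdel : D.Deletable e) {X Y : Set D.V}
    (hX : ∀ e : D.E, ¬(D.tail e ∉ X ∧ D.head e ∈ X)) (heY : e ∈ D.cutAt Y)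
    (hYX : D.cutAt Y \ {e} ⊆ D.cutAt X) : e ∈ D.cutAt X := by
  obtain ⟨g, hge, hgY, htail, hhead⟩ := hdel.exists_mem_cutAt heY
  obtain ⟨hgt, hgh⟩ := (mem_cutAt_iff_of_no_entering hX).mp (hYX ⟨hgY, hge⟩)
  rw [mem_cutAt_iff_of_no_entering hX]
  exact ⟨by_contra fun ht => notMem_of_reflTransGen_dstep hX htail ht hgt,
    notMem_of_reflTransGen_dstep hX hhead hgh⟩

lemma Acyclic.oriented (hac : D.Acyclic) (htr : D.TransitivelyReduced) : D.Oriented := by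
  have hloop : ∀ e : D.E, D.tail e ≠ D.head e := fun e he =>
    hac _ _ ⟨e, rfl, rfl⟩ (by rw [he])
  refine ⟨hloop, fun e f hef hpair => ?_⟩
  rcases Set.pair_eq_pair_iff.mp hpair with ⟨ht, hh⟩ | ⟨ht, hh⟩
  · exact htr e ⟨hloop e, .single ⟨f, hef.symm, ht.symm, hh.symm⟩⟩
  · exact hac _ _ ⟨e, rfl, rfl⟩ (.single ⟨f, hh.symm, ht.symm⟩)

lemma mem_cutAt_of_card_le_two (hV : Fintype.card D.V ≤ 2) {X : Set D.V}
    (hX : (D.cutAt X).Nonempty) {f : D.E} (hf : D.tail f ≠ D.head f) : f ∈ D.cutAt X := by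
  obtain ⟨u, w, hu, hw⟩ : ∃ u w, u ∈ X ∧ w ∉ X := by
    obtain ⟨f₀, ⟨h₁, h₂⟩ | ⟨h₁, h₂⟩⟩ := hX
    exacts [⟨_, _, h₁, h₂⟩, ⟨_, _, h₂, h₁⟩]
  have huw : u ≠ w := fun h => hw (h ▸ hu)
  have hall : ∀ z : D.V, z = u ∨ z = w := by
    by_contra! hz
    obtain ⟨z, hzu, hzw⟩ := hz
    exact hV.not_gt (Fintype.two_lt_card_iff.mpr ⟨u, w, z, huw, Ne.symm hzu, Ne.symm hzw⟩)
  rcases hall (D.tail f) with h₁ | h₁ <;> rcases hall (D.head f) with h₂ | h₂ <;>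
    simp_all [mem_cutAt]

lemma hasOddDijoin_of_card_le_two (hV : Fintype.card D.V ≤ 2) : D.HasOddDijoin := by
  by_cases hbond : ∃ S, D.IsDirectedBond S
  · obtain ⟨_, ⟨⟨⟨e, he⟩, X₀, rfl⟩, -⟩, -⟩ := hbond
    have hloop : D.tail e ≠ D.head e := fun h => by simp [mem_cutAt, h] at he
    refine ⟨{e}, fun S hS => ?_⟩
    obtain ⟨⟨⟨hne, X, rfl⟩, -⟩, -⟩ := hS
    rw [Set.singleton_inter_of_mem (mem_cutAt_of_card_le_two hV hne hloop), Set.ncard_singleton]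
    exact odd_one
  · exact ⟨∅, fun S hS => absurd ⟨S, hS⟩ hbond⟩

/-! ## Directed bonds of one-step cut minors -/

section Contract

variable {e : D.E}

def contractMk (e : D.E) (u : D.V) : (D.contract {e}).V := Quotient.mk _ u

lemma contract_tail (f : (D.contract {e}).E) :
    (D.contract {e}).tail f = D.contractMk e (D.tail f.1) := rfl

lemma contract_head (f : (D.contract {e}).E) :
    (D.contract {e}).head f = D.contractMk e (D.head f.1) := rfl

lemma eqvGen_touchRel_singleton {u w : D.V} (h : EqvGen (D.touchRel {e}) u w) :
    u = w ∨ (u = D.tail e ∧ w = D.head e) ∨ (u = D.head e ∧ w = D.tail e) := by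
  induction h with
  | rel _ _ hxy =>
    obtain ⟨_, rfl, rfl, rfl⟩ := hxy
    exact Or.inr (Or.inl ⟨rfl, rfl⟩)
  | refl => exact Or.inl rfl
  | symm _ _ _ ih => tauto
  | trans _ _ _ _ _ ih₁ ih₂ =>
    rcases ih₁ with rfl | ⟨rfl, rfl⟩ | ⟨rfl, rfl⟩ <;>
      rcases ih₂ with h | ⟨h₁, h₂⟩ | ⟨h₁, h₂⟩ <;> tauto

lemma contractMk_eq_contractMk_iff {u w : D.V} :
    D.contractMk e u = D.contractMk e w ↔
      u = w ∨ (u = D.tail e ∧ w = D.head e) ∨ (u = D.head e ∧ w = D.tail e) := by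
  refine ⟨fun h => eqvGen_touchRel_singleton (Quotient.exact h), ?_⟩
  rintro (rfl | ⟨rfl, rfl⟩ | ⟨rfl, rfl⟩)
  · rfl
  · exact Quotient.sound (EqvGen.rel _ _ ⟨e, rfl, rfl, rfl⟩)
  · exact (Quotient.sound (EqvGen.rel _ _ ⟨e, rfl, rfl, rfl⟩)).symm

lemma contractMk_mem_image_iff {X : Set D.V} (hX : D.tail e ∈ X ↔ D.head e ∈ X) {u : D.V} :
    D.contractMk e u ∈ D.contractMk e '' X ↔ u ∈ X := by
  refine ⟨?_, Set.mem_image_of_mem _⟩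
  rintro ⟨w, hw, hwu⟩
  rcases contractMk_eq_contractMk_iff.mp hwu with rfl | ⟨rfl, rfl⟩ | ⟨rfl, rfl⟩
  exacts [hw, hX.mp hw, hX.mpr hw]

lemma contract_cutAt_image {X : Set D.V} (hX : D.tail e ∈ X ↔ D.head e ∈ X) :
    (D.contract {e}).cutAt (D.contractMk e '' X) = Subtype.val ⁻¹' D.cutAt X := by
  ext f
  simp only [mem_cutAt, contract_tail, contract_head, contractMk_mem_image_iff hX]
  exact Iff.rfl

lemma image_val_contract_cutAt (W : Set (D.contract {e}).V) :
    Subtype.val '' (D.contract {e}).cutAt W = D.cutAt (D.contractMk e ⁻¹' W) := by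
  ext f
  refine ⟨fun ⟨f', hf', hf'f⟩ => hf'f ▸ hf', fun hf => ⟨⟨f, ?_⟩, hf, rfl⟩⟩
  intro hfe
  have : D.contractMk e (D.tail f) = D.contractMk e (D.head f) :=
    contractMk_eq_contractMk_iff.mpr (Or.inr (Or.inl ⟨congrArg _ hfe, congrArg _ hfe⟩))
  simp [mem_cutAt, this] at hf

lemma IsDirectedBond.contract {S : Set D.E} (hS : D.IsDirectedBond S) (he : e ∉ S) :
    (D.contract {e}).IsDirectedBond (Subtype.val ⁻¹' S) := by
  obtain ⟨⟨-, hmin⟩, ⟨f, hf⟩, X, rfl, hX⟩ := hS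
  have hXe : D.tail e ∈ X ↔ D.head e ∈ X := by
    rw [mem_cutAt] at he
    tauto
  have hcut := (contract_cutAt_image hXe).symm
  have hne : (Subtype.val ⁻¹' D.cutAt X : Set (D.contract {e}).E).Nonempty :=
    ⟨⟨f, fun hfe => he (Set.mem_singleton_iff.mp hfe ▸ hf)⟩, hf⟩
  refine ⟨⟨⟨hne, _, hcut⟩, ?_⟩, hne, _, hcut, fun f => ?_⟩
  · rintro T ⟨hTne, W, rfl⟩ hT
    rw [← hmin _ ⟨hTne.image _, _, image_val_contract_cutAt W⟩ (Set.image_subset_iff.mpr hT)]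
    exact (Set.preimage_image_eq _ Subtype.val_injective).symm
  · rw [contract_tail, contract_head, contractMk_mem_image_iff hXe, contractMk_mem_image_iff hXe]
    exact hX f.1

end Contract

lemma IsDirectedBond.deleteEdge {e : D.E} (hdel : D.Deletable e) {S : Set D.E}
    (hS : D.IsDirectedBond S) : (D.deleteEdge e).IsDirectedBond (Subtype.val ⁻¹' S) := by
  obtain ⟨⟨-, hmin⟩, ⟨f, hf⟩, X, rfl, hX⟩ := hS
  have hcut : (Subtype.val ⁻¹' D.cutAt X : Set (D.deleteEdge e).E) = (D.deleteEdge e).cutAt X :=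
    rfl
  have hne : (Subtype.val ⁻¹' D.cutAt X : Set (D.deleteEdge e).E).Nonempty := by
    by_cases hfe : f = e
    · obtain ⟨g, hge, hg, -⟩ := hdel.exists_mem_cutAt (hfe ▸ hf)
      exact ⟨⟨g, hge⟩, hg⟩
    · exact ⟨⟨f, hfe⟩, hf⟩
  refine ⟨⟨⟨hne, X, hcut⟩, ?_⟩, hne, X, hcut, fun f => hX f.1⟩
  rintro T ⟨⟨g, hg⟩, Y, rfl⟩ hT
  have hYX : D.cutAt Y \ {e} ⊆ D.cutAt X := fun f ⟨hfY, hfe⟩ => hT (a := ⟨f, hfe⟩) hfY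
  have hsub : D.cutAt Y ⊆ D.cutAt X := by
    intro f hfY
    by_cases hfe : f = e
    · exact hfe ▸ hdel.mem_cutAt_of_diff_subset hX (hfe ▸ hfY) hYX
    · exact hYX ⟨hfY, hfe⟩
  have hYX' : D.cutAt Y = D.cutAt X := hmin _ ⟨⟨g.1, hg⟩, Y, rfl⟩ hsub
  rw [← hYX']
  rfl

lemma deleteVertex_cutAt {v : D.V} (hv : D.Isolated v) (W : Set (D.deleteVertex v hv).V) :
    (D.deleteVertex v hv).cutAt W = D.cutAt (Subtype.val '' W) := by
  ext f
  have hmem : ∀ (u : D.V) (hu : u ≠ v), u ∈ Subtype.val '' W ↔ ⟨u, hu⟩ ∈ W := fun u hu =>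
    ⟨fun ⟨_, hu', hu'u⟩ => by subst hu'u; exact hu', fun h => ⟨_, h, rfl⟩⟩
  have ht := hmem _ (hv f).1
  have hh := hmem _ (hv f).2
  exact (or_congr (and_congr ht (not_congr hh)) (and_congr (not_congr ht) hh)).symm

lemma IsDirectedBond.deleteVertex {v : D.V} (hv : D.Isolated v) {S : Set D.E}
    (hS : D.IsDirectedBond S) : (D.deleteVertex v hv).IsDirectedBond S := by
  obtain ⟨⟨-, hmin⟩, hne, X, rfl, hX⟩ := hS
  have hcut : D.cutAt X = (D.deleteVertex v hv).cutAt (Subtype.val ⁻¹' X) := rfl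
  exact ⟨⟨⟨hne, _, hcut⟩, fun T ⟨hTne, W, hW⟩ hT =>
    hmin T ⟨hTne, _, hW.trans (deleteVertex_cutAt hv W)⟩ hT⟩, hne, _, hcut, fun f => hX f⟩

lemma HasOddDijoin.exists_odd_inter_of_contract {e : D.E} (h : (D.contract {e}).HasOddDijoin) :
    ∃ J : Set D.E, ∀ S, D.IsDirectedBond S → e ∉ S → Odd (J ∩ S).ncard := by
  obtain ⟨J, hJ⟩ := h
  exact ⟨Subtype.val '' J, fun S hS he => odd_ncard_image_val_inter (hJ _ (hS.contract he))⟩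

lemma HasOddDijoin.of_contract_of_reflTransGen {e : D.E}
    (hcycle : ReflTransGen D.dstep (D.head e) (D.tail e)) (h : (D.contract {e}).HasOddDijoin) :
    D.HasOddDijoin := by
  obtain ⟨J, hJ⟩ := h.exists_odd_inter_of_contract
  refine ⟨J, fun S hS => hJ S hS ?_⟩
  obtain ⟨-, -, X, rfl, hX⟩ := hS
  exact notMem_cutAt_of_reflTransGen hX hcycle

lemma HasOddDijoin.of_deleteEdge {e : D.E} (hdel : D.Deletable e)
    (h : (D.deleteEdge e).HasOddDijoin) : D.HasOddDijoin := by
  obtain ⟨J, hJ⟩ := h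
  exact ⟨Subtype.val '' J, fun S hS => odd_ncard_image_val_inter (hJ _ (hS.deleteEdge hdel))⟩

lemma HasOddDijoin.of_deleteVertex {v : D.V} (hv : D.Isolated v)
    (h : (D.deleteVertex v hv).HasOddDijoin) : D.HasOddDijoin := by
  obtain ⟨J, hJ⟩ := h
  exact ⟨J, fun S hS => hJ S (hS.deleteVertex hv)⟩

/-- `D / e₂` takes care of the directed bonds inside `F`, and `D / e₁` of those inside `Fᶜ`. -/
lemma HasOddDijoin.of_contract_of_bonds_split (F : Set D.E) {e₁ e₂ : D.E} (he₁ : e₁ ∈ F)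
    (he₂ : e₂ ∉ F) (hsplit : ∀ S, D.IsBond S → S ⊆ F ∨ S ⊆ Fᶜ)
    (h₁ : (D.contract {e₁}).HasOddDijoin) (h₂ : (D.contract {e₂}).HasOddDijoin) :
    D.HasOddDijoin := by
  obtain ⟨J₁, hJ₁⟩ := h₁.exists_odd_inter_of_contract
  obtain ⟨J₂, hJ₂⟩ := h₂.exists_odd_inter_of_contract
  refine ⟨(J₂ ∩ F) ∪ (J₁ \ F), fun S hS => ?_⟩
  rcases hsplit S hS.1 with hSF | hSF
  · have hJ : ((J₂ ∩ F) ∪ (J₁ \ F)) ∩ S = J₂ ∩ S := by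
      ext f
      have := @hSF f
      simp only [Set.mem_inter_iff, Set.mem_union, Set.mem_sdiff]
      tauto
    rw [hJ]
    exact hJ₂ S hS fun h => he₂ (hSF h)
  · have hJ : ((J₂ ∩ F) ∪ (J₁ \ F)) ∩ S = J₁ ∩ S := by
      ext f
      have := @hSF f
      simp only [Set.mem_inter_iff, Set.mem_union, Set.mem_sdiff, Set.mem_compl_iff] at this ⊢
      tauto
    rw [hJ]
    exact hJ₁ S hS fun h => hSF h he₁

/-! ## Separations of the underlying graph -/

def incidentEdges (A : Set D.V) : Set D.E := {f | D.tail f ∈ A ∨ D.head f ∈ A}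

lemma IsBond.subset_or_subset_compl {A : Set D.V} {v : D.V} (hv : v ∉ A)
    (hA : ∀ f ∈ D.incidentEdges A, D.tail f ∈ insert v A ∧ D.head f ∈ insert v A)
    {S : Set D.E} (hS : D.IsBond S) : S ⊆ D.incidentEdges A ∨ S ⊆ (D.incidentEdges A)ᶜ := by
  obtain ⟨⟨-, X, rfl⟩, hmin⟩ := hS
  obtain ⟨Y, hYX, hvY⟩ : ∃ Y, D.cutAt Y = D.cutAt X ∧ v ∉ Y := by
    by_cases hvX : v ∈ X
    exacts [⟨Xᶜ, cutAt_compl X, not_not.mpr hvX⟩, ⟨X, rfl, hvX⟩]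
  rw [← hYX] at hmin ⊢
  have hmemYA : ∀ u ∈ insert v A, u ∈ Y ∩ A ↔ u ∈ Y := by
    rintro u (rfl | hu)
    · simp [hvY]
    · simp [hu]
  have hYA : D.cutAt (Y ∩ A) = D.cutAt Y ∩ D.incidentEdges A := by
    ext f
    by_cases hf : f ∈ D.incidentEdges A
    · simp only [Set.mem_inter_iff, hf, and_true, mem_cutAt, hmemYA _ (hA f hf).1,
        hmemYA _ (hA f hf).2]
    · simp only [incidentEdges, Set.mem_ofPred_eq, not_or] at hf
      simp [mem_cutAt, incidentEdges, hf]
  by_cases hne : (D.cutAt Y ∩ D.incidentEdges A).Nonempty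
  · left
    rw [← hmin _ ⟨hne, _, hYA.symm⟩ Set.inter_subset_left]
    exact Set.inter_subset_right
  · exact Or.inr fun f hfY hfA => hne ⟨f, hfY, hfA⟩

lemma twoConnected_of_reflTransGen_ustepAvoiding (hcard : 3 ≤ Fintype.card D.V)
    (h : ∀ v a b : D.V, a ≠ v → b ≠ v → ReflTransGen (D.ustepAvoiding v) a b) :
    D.TwoConnected := by
  refine ⟨hcard, fun a b => ?_, h⟩
  obtain ⟨v, hav, hbv⟩ : ∃ v, v ≠ a ∧ v ≠ b := by
    by_contra! hv
    have hsub : Finset.univ ⊆ ({a, b} : Finset D.V) := fun v _ =>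
      Finset.mem_insert.mpr <| (eq_or_ne v a).imp_right fun hva =>
        Finset.mem_singleton.mpr (hv v hva)
    have := (Finset.card_le_card hsub).trans Finset.card_le_two
    rw [Finset.card_univ] at this
    omega
  exact ReflTransGen.mono (fun _ _ h => h.2.2) _ _ (h v a b hav.symm hbv.symm)

end MultiDigraph

/-! ## Minimal obstructions -/

open MultiDigraph

lemma CutMinorStep.not_isIsomorphic {D' D : MultiDigraph} (h : CutMinorStep D' D) :
    ¬ IsIsomorphic D' D := by
  rintro ⟨iso⟩
  cases h with
  | contractEdge D e =>
    exact (Fintype.card_lt_of_injective_of_notMem _ Subtype.val_injective (b := e)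
      (by simp)).ne (Fintype.card_congr iso.emap)
  | delEdge D e =>
    exact (Fintype.card_lt_of_injective_of_notMem _ Subtype.val_injective (b := e)
      (by simp)).ne (Fintype.card_congr iso.emap)
  | delVertex D v =>
    exact (Fintype.card_lt_of_injective_of_notMem _ Subtype.val_injective (b := v)
      (by simp)).ne (Fintype.card_congr iso.vmap)

namespace MinimalObstruction

variable {D : MultiDigraph}

lemma hasOddDijoin_of_cutMinorStep (h : MinimalObstruction D) {D' : MultiDigraph}
    (hs : CutMinorStep D' D) : D'.HasOddDijoin :=
  h.2 D' ⟨.single hs, hs.not_isIsomorphic⟩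

lemma three_le_card (h : MinimalObstruction D) : 3 ≤ Fintype.card D.V := by
  by_contra! hV
  exact h.1 (hasOddDijoin_of_card_le_two (by omega))

lemma acyclic (h : MinimalObstruction D) : D.Acyclic := by
  rintro _ _ ⟨e, rfl, rfl⟩ hcycle
  exact h.1 (.of_contract_of_reflTransGen hcycle
    (h.hasOddDijoin_of_cutMinorStep (.contractEdge D e)))

lemma transitivelyReduced (h : MinimalObstruction D) : D.TransitivelyReduced := fun e hdel =>
  h.1 (.of_deleteEdge hdel (h.hasOddDijoin_of_cutMinorStep (.delEdge D e hdel)))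

lemma exists_incident (h : MinimalObstruction D) (v : D.V) :
    ∃ e : D.E, D.tail e = v ∨ D.head e = v := by
  by_contra! hv
  exact h.1 (.of_deleteVertex hv (h.hasOddDijoin_of_cutMinorStep (.delVertex D v hv)))

lemma reflTransGen_ustepAvoiding (h : MinimalObstruction D) (v a b : D.V) (ha : a ≠ v)
    (hb : b ≠ v) : ReflTransGen (D.ustepAvoiding v) a b := by
  by_contra hab
  set A : Set D.V := {u | u ≠ v ∧ ReflTransGen (D.ustepAvoiding v) a u}
  have hA : ∀ f ∈ D.incidentEdges A, D.tail f ∈ insert v A ∧ D.head f ∈ insert v A := by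
    rintro f (⟨ht, hat⟩ | ⟨hh, hah⟩)
    · refine ⟨Or.inr ⟨ht, hat⟩, or_iff_not_imp_left.mpr fun hh => ⟨hh, ?_⟩⟩
      exact hat.tail ⟨ht, hh, f, Or.inl ⟨rfl, rfl⟩⟩
    · refine ⟨or_iff_not_imp_left.mpr fun ht => ⟨ht, ?_⟩, Or.inr ⟨hh, hah⟩⟩
      exact hah.tail ⟨hh, ht, f, Or.inr ⟨rfl, rfl⟩⟩
  obtain ⟨e₁, he₁⟩ := h.exists_incident a
  obtain ⟨e₂, he₂⟩ := h.exists_incident b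
  have hbA : b ∉ insert v A := by
    rintro (hbv | ⟨-, hab'⟩)
    exacts [hb hbv, hab hab']
  refine h.1 (.of_contract_of_bonds_split (D.incidentEdges A) ?_ ?_
    (fun S hS => hS.subset_or_subset_compl (fun hv => hv.1 rfl) hA)
    (h.hasOddDijoin_of_cutMinorStep (.contractEdge D e₁))
    (h.hasOddDijoin_of_cutMinorStep (.contractEdge D e₂)))
  · rcases he₁ with he | he
    exacts [Or.inl (he ▸ ⟨ha, .refl⟩), Or.inr (he ▸ ⟨ha, .refl⟩)]
  · intro he₂A
    rcases he₂ with he | he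
    exacts [hbA (he ▸ (hA e₂ he₂A).1), hbA (he ▸ (hA e₂ he₂A).2)]

end MinimalObstruction

theorem stmt10 (D : MultiDigraph) (h : MinimalObstruction D) :
    D.TwoConnected ∧ D.Oriented ∧ D.Acyclic ∧ D.TransitivelyReduced :=
  ⟨twoConnected_of_reflTransGen_ustepAvoiding h.three_le_card h.reflTransGen_ustepAvoiding,
    h.acyclic.oriented h.transitivelyReduced, h.acyclic, h.transitivelyReduced⟩
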